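/- arXiv:2306.13834 — 2 statements merged into one kernel-verified Lean document; each statement's English description precedes it below -/
import Mathlib

section
/- Let b : ℝ/ℤ → ℝ/ℤ be a circle homeomorphism with irrational rotation number, and let γ : ℝ/ℤ → ℝ/ℤ be an orientation-reversing smooth involution such that b ∘ γ = γ ∘ b⁻¹. If b is smoothly conjugate to the rotation θ ↦ θ + α (α irrational), then in the conjugating coordinate γ takes the form γ(θ) = c - θ for some constant c; in particular its derivative is identically -1. -/
/-- In the coordinate conjugating the circle map `b` to the rotation by an
irrational `α`, an orientation-reversing smooth involution `γ` satisfying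
`b ∘ γ = γ ∘ b⁻¹` takes the form `γ(θ) = c - θ`. Here `Γ : ℝ → ℝ` is a lift of
the conjugated `γ`: smooth, strictly decreasing (orientation-reversing), of
degree `-1` (`Γ(θ+1) = Γ(θ) - 1`), an involution, and the relation
`b ∘ γ = γ ∘ b⁻¹` reads `Γ(θ) + α = Γ(θ - α)`. -/
theorem involution_is_reflection (α : ℝ) (hα : Irrational α)
    (Γ : ℝ → ℝ) (hsmooth : ContDiff ℝ (⊤ : ℕ∞) Γ) (hmono : StrictAnti Γ)
    (hdeg : ∀ θ : ℝ, Γ (θ + 1) = Γ θ - 1)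
    (hinv : ∀ θ : ℝ, Γ (Γ θ) = θ)
    (hrel : ∀ θ : ℝ, Γ θ + α = Γ (θ - α)) :
    (∃ C : ℝ, ∀ θ : ℝ, Γ θ = C - θ) ∧ (∀ θ : ℝ, deriv Γ θ = -1) := by
  set F : ℝ → ℝ := fun θ => Γ θ + θ with hF
  have hFc : Continuous F := (hsmooth.continuous).add continuous_id
  -- the subgroup generated by 1 and α
  set G : AddSubgroup ℝ := AddSubgroup.closure {1, α} with hG
  have hdense : Dense (G : Set ℝ) := by
    rcases G.dense_or_cyclic with h | ⟨a, ha⟩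
    · exact h
    · exfalso
      have h1 : (1 : ℝ) ∈ G := AddSubgroup.subset_closure (by simp)
      have h2 : α ∈ G := AddSubgroup.subset_closure (by simp)
      rw [ha, AddSubgroup.mem_closure_singleton] at h1 h2
      obtain ⟨m, hm⟩ := h1
      obtain ⟨n, hn⟩ := h2
      simp only [zsmul_eq_mul] at hm hn
      have hm0 : (m : ℝ) ≠ 0 := by
        intro h
        rw [h, zero_mul] at hm
        exact one_ne_zero hm.symm
      have : α = (n : ℝ) / (m : ℝ) := by
        field_simp
        rw [← hn, mul_assoc, mul_comm a, hm, mul_one]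
      exact hα ⟨(n : ℚ) / (m : ℚ), by push_cast [this]; ring⟩
  -- F is invariant under translations by elements of G
  have hinvariant : ∀ g ∈ G, ∀ θ : ℝ, F (θ + g) = F θ := by
    intro g hg
    induction hg using AddSubgroup.closure_induction with
    | mem x hx =>
      rcases hx with rfl | rfl
      · intro θ; simp only [hF, hdeg θ]; ring
      · intro θ
        have := hrel (θ + x)
        simp only [add_sub_cancel_right] at this
        simp only [hF]
        linarith
    | zero => intro θ; simp
    | add x y _ _ hx hy =>
      intro θ
      rw [← add_assoc, hy (θ + x), hx θ]
    | neg x _ hx =>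
      intro θ
      have := hx (θ + -x)
      simp only [neg_add_cancel_right] at this
      linarith
  -- F is constant
  have hconst : ∀ θ : ℝ, F θ = F 0 := by
    intro θ
    have hcl : IsClosed {x : ℝ | F x = F θ} := isClosed_eq hFc continuous_const
    have hsub : (fun g => θ + g) '' (G : Set ℝ) ⊆ {x : ℝ | F x = F θ} := by
      rintro _ ⟨g, hg, rfl⟩
      exact hinvariant g hg θ
    have h0 : (0 : ℝ) ∈ closure ((fun g => θ + g) '' (G : Set ℝ)) := by
      have hmem : (0 : ℝ) ∈ (fun g => θ + g) '' closure (G : Set ℝ) :=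
        ⟨-θ, hdense (-θ), by ring⟩
      exact image_closure_subset_closure_image (by continuity) hmem
    exact (hcl.closure_subset_iff.mpr hsub h0).symm
  have hform : ∀ θ : ℝ, Γ θ = Γ 0 - θ := by
    intro θ
    have := hconst θ
    simp only [hF, add_zero] at this
    linarith
  refine ⟨⟨Γ 0, hform⟩, fun θ => ?_⟩
  have : Γ = fun θ => Γ 0 - θ := funext hform
  rw [this]
  exact ((hasDerivAt_id θ).const_sub (Γ 0)).deriv.trans (by simp)
end

section
/- Fix N ∈ ℕ with N ≥ 2. The N-1 polynomials u_{k,N}(x₁,x₂) = T_N(x₁ cos α_k + x₂ sin α_k) - (-1)^k T_N(x₁ cos α_k - x₂ sin α_k), where α_k = πk/(2N) and k ranges over 1,…,N-1, are linearly independent in the space of real polynomials in two variables. -/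
/-!
Restricted to the line `x₂ = 0`, `u_{k,N}` is `(1 - (-1)^k) T_N(x₁ cos α_k)`, and its
`x₂`-derivative there is `(1 + (-1)^k) sin α_k T_N'(x₁ cos α_k)`. So a vanishing combination
`∑ g_k u_{k,N}` yields `∑_{k odd} g_k T_N(cos α_k · x) = 0` and
`∑_{k even} g_k sin α_k T_N'(cos α_k · x) = 0`. The coefficients of `T_N` in degrees
`N, N - 2, N - 4, …` alternate strictly in sign, so none vanishes, and comparing coefficients
turns each identity into a Vandermonde system in the distinct nodes `cos² α_k`.
-/

open Polynomial Finset Real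

namespace Polynomial.Chebyshev

variable {R : Type*} [CommRing R] [LinearOrder R] [IsStrictOrderedRing R]

theorem coeff_T_natCast_self_pos (n : ℕ) : 0 < (T R n).coeff n := by
  have h := leadingCoeff_T R n
  rw [leadingCoeff, natDegree_T, Int.natAbs_natCast] at h
  rw [h]
  positivity

theorem neg_one_pow_mul_coeff_T_pos (i j : ℕ) : 0 < (-1) ^ j * (T R ↑(i + 2 * j)).coeff i := by
  induction j generalizing i with
  | zero => simpa using coeff_T_natCast_self_pos i
  | succ j ih =>
    have hT (i : ℕ) :
        T R ↑(i + 2 * (j + 1)) = 2 * X * T R ↑(i + 1 + 2 * j) - T R ↑(i + 2 * j) := by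
      convert T_add_two R ↑(i + 2 * j) using 4 <;> push_cast <;> ring
    induction i with
    | zero =>
      have := ih 0
      rw [hT, coeff_sub, mul_assoc, coeff_ofNat_mul, mul_coeff_zero, coeff_X_zero, zero_mul,
        mul_zero, zero_sub, pow_succ]
      linarith
    | succ i ihi =>
      have := ih (i + 1)
      rw [hT, coeff_sub, mul_assoc, coeff_ofNat_mul, coeff_X_mul, pow_succ,
        show i + 1 + 1 + 2 * j = i + 2 * (j + 1) by ring]
      rw [pow_succ] at ihi
      linarith

theorem coeff_T_sub_two_mul_ne_zero {n j : ℕ} (h : 2 * j ≤ n) :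
    (T R n).coeff (n - 2 * j) ≠ 0 := by
  have := neg_one_pow_mul_coeff_T_pos (R := R) (n - 2 * j) j
  rw [Nat.sub_add_cancel h] at this
  exact right_ne_zero_of_mul this.ne'

theorem coeff_derivative_T_sub_two_mul_ne_zero {n j : ℕ} (h : 2 * j < n) :
    (derivative (T R n)).coeff (n - 1 - 2 * j) ≠ 0 := by
  rw [coeff_derivative, show n - 1 - 2 * j + 1 = n - 2 * j by omega]
  exact mul_ne_zero (coeff_T_sub_two_mul_ne_zero h.le) (by positivity)

end Polynomial.Chebyshev

theorem eq_zero_of_forall_sum_mul_pow_eq_zero {K ι : Type*} [Field K] [DecidableEq ι]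
    {s : Finset ι} {v w : ι → K} (hv : Set.InjOn v s)
    (h : ∀ e < #s, ∑ i ∈ s, w i * v i ^ e = 0) : ∀ i ∈ s, w i = 0 := by
  -- Test the relations against the Lagrange basis polynomial at the node `v i`.
  have hP : ∀ P : K[X], P.natDegree < #s → ∑ i ∈ s, w i * P.eval (v i) = 0 := by
    intro P hP
    simp_rw [eval_eq_sum_range' hP, mul_sum]
    rw [sum_comm]
    refine sum_eq_zero fun e he => ?_
    rw [← mul_zero (P.coeff e), ← h e (mem_range.1 he), mul_sum]
    exact sum_congr rfl fun i _ => by ring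
  intro i hi
  have hdeg : (Lagrange.basis s v i).natDegree < #s := by
    rw [Lagrange.natDegree_basis hv hi]
    have := card_pos.2 ⟨i, hi⟩
    omega
  have := hP _ hdeg
  rwa [sum_eq_single_of_mem i hi fun k hk hki => by rw [Lagrange.eval_basis_of_ne hki.symm hk,
    mul_zero], Lagrange.eval_basis_self hv hi, mul_one] at this

theorem Polynomial.sum_mul_pow_mul_coeff_eq_zero {R ι : Type*} [CommRing R] [IsDomain R]
    [Infinite R] {s : Finset ι} {q : R[X]} {b c : ι → R}
    (h : ∀ x, ∑ k ∈ s, b k * q.eval (c k * x) = 0) (d : ℕ) :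
    (∑ k ∈ s, b k * c k ^ d) * q.coeff d = 0 := by
  have hq : ∑ k ∈ s, C (b k) * q.comp (C (c k) * X) = 0 :=
    Polynomial.funext fun x => by simpa [eval_finsetSum] using h x
  have := congrArg (coeff · d) hq
  simp only [finsetSum_coeff, coeff_C_mul, comp_C_mul_X_coeff, coeff_zero] at this
  rw [sum_mul, ← this]
  exact sum_congr rfl fun k _ => by ring

theorem Polynomial.eq_zero_of_forall_sum_mul_eval_mul_eq_zero {K ι : Type*} [Field K]
    [Infinite K] [DecidableEq ι] {q : K[X]} {D : ℕ}
    (hq : ∀ j, 2 * j ≤ D → q.coeff (D - 2 * j) ≠ 0) {s : Finset ι} (hs : #s ≤ D / 2 + 1)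
    {b c : ι → K} (hc : Set.InjOn (fun k => c k ^ 2) s) (hc₀ : ∀ k ∈ s, c k ≠ 0)
    (h : ∀ x, ∑ k ∈ s, b k * q.eval (c k * x) = 0) : ∀ k ∈ s, b k = 0 := by
  -- The coefficients in degrees `d₀ + 2 * e`, `e < #s`, form a Vandermonde system for the
  -- weights `b k * c k ^ d₀` in the nodes `c k ^ 2`.
  set d₀ := D - 2 * (#s - 1)
  have hw : ∀ k ∈ s, b k * c k ^ d₀ = 0 := by
    refine eq_zero_of_forall_sum_mul_pow_eq_zero hc fun e he => ?_
    have hcoeff := sum_mul_pow_mul_coeff_eq_zero h (D - 2 * (#s - 1 - e))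
    rw [mul_eq_zero, or_iff_left (hq _ (by omega)),
      show D - 2 * (#s - 1 - e) = d₀ + 2 * e by omega] at hcoeff
    rw [← hcoeff]
    exact sum_congr rfl fun k _ => by ring
  intro k hk
  exact (mul_eq_zero.1 (hw k hk)).resolve_right (pow_ne_zero _ (hc₀ k hk))

theorem Fin.card_filter_mod_two_eq_le (n r : ℕ) : #{k : Fin n | k.val % 2 = r} ≤ (n + 1) / 2 := by
  have := card_le_card_of_injOn (fun k : Fin n => k.val / 2) (s := {k : Fin n | k.val % 2 = r})
    (t := range ((n + 1) / 2)) (fun k _ => by simp only [coe_range, Set.mem_Iio]; omega)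
    (fun k hk l hl hkl => by
      simp only [coe_filter, mem_univ, true_and, Set.mem_ofPred_eq] at hk hl hkl
      ext
      omega)
  simpa using this

theorem Polynomial.eq_zero_of_forall_sum_mul_eval_mul_eq_zero_of_mod_two {K : Type*} [Field K]
    [Infinite K] {n D r : ℕ} (hnD : n ≤ D + 1) {q : K[X]}
    (hq : ∀ j, 2 * j ≤ D → q.coeff (D - 2 * j) ≠ 0) {b c : Fin n → K}
    (hc : Function.Injective fun k => c k ^ 2) (hc₀ : ∀ k, c k ≠ 0)
    (hb : ∀ k : Fin n, k.val % 2 ≠ r → b k = 0) (h : ∀ x, ∑ k, b k * q.eval (c k * x) = 0) :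
    b = 0 := by
  have hs := Fin.card_filter_mod_two_eq_le n r
  funext k
  by_cases hk : k.val % 2 = r
  · refine eq_zero_of_forall_sum_mul_eval_mul_eq_zero hq (s := {k : Fin n | k.val % 2 = r})
      (by omega) hc.injOn (fun k _ => hc₀ k) (fun x => ?_) k (by simpa using hk)
    rw [sum_filter_of_ne fun k _ hne => ?_]
    · exact h x
    · by_contra hk
      exact hne (by rw [hb k hk, zero_mul])
  · exact hb k hk

theorem Polynomial.hasDerivAt_eval_add_mul_sub_mul_eval_sub_mul {𝕜 : Type*}
    [NontriviallyNormedField 𝕜] (p : 𝕜[X]) (a s ε : 𝕜) :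
    HasDerivAt (fun t => p.eval (a + t * s) - ε * p.eval (a - t * s))
      ((1 + ε) * s * p.derivative.eval a) 0 := by
  have h₁ : HasDerivAt (fun t => p.eval (a + t * s)) (p.derivative.eval a * s) 0 := by
    simpa [Function.comp_def] using
      (p.hasDerivAt (a + 0 * s)).comp 0 (((hasDerivAt_id 0).mul_const s).const_add a)
  have h₂ : HasDerivAt (fun t => p.eval (a - t * s)) (p.derivative.eval a * -s) 0 := by
    simpa [Function.comp_def] using
      (p.hasDerivAt (a - 0 * s)).comp 0 (((hasDerivAt_id 0).mul_const s).const_sub a)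
  exact (h₁.fun_sub (h₂.const_mul ε)).congr_deriv (by ring)

theorem Polynomial.sum_mul_eval_mul_eq_zero_of_forall_sum_eval_add_sub {R ι : Type*}
    [CommRing R] {s : Finset ι} {p : R[X]} {g a b ε : ι → R}
    (h : ∀ x t, ∑ k ∈ s, g k * (p.eval (x * a k + t * b k) - ε k * p.eval (x * a k - t * b k)) = 0)
    (x : R) : ∑ k ∈ s, g k * (1 - ε k) * p.eval (a k * x) = 0 := by
  rw [← h x 0]
  refine sum_congr rfl fun k _ => ?_
  simp only [zero_mul, add_zero, sub_zero, mul_comm x]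
  ring

theorem Polynomial.sum_mul_eval_derivative_mul_eq_zero_of_forall_sum_eval_add_sub {𝕜 ι : Type*}
    [NontriviallyNormedField 𝕜] {s : Finset ι} {p : 𝕜[X]} {g a b ε : ι → 𝕜}
    (h : ∀ x t, ∑ k ∈ s, g k * (p.eval (x * a k + t * b k) - ε k * p.eval (x * a k - t * b k)) = 0)
    (x : 𝕜) : ∑ k ∈ s, g k * ((1 + ε k) * b k) * p.derivative.eval (a k * x) = 0 := by
  have := HasDerivAt.fun_sum (u := s) fun k _ =>
    (p.hasDerivAt_eval_add_mul_sub_mul_eval_sub_mul (x * a k) (b k) (ε k)).const_mul (g k)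
  simp only [h x] at this
  convert ((hasDerivAt_const (0 : 𝕜) (0 : 𝕜)).unique this).symm using 2 with k
  rw [mul_comm x]
  ring

theorem Real.pi_mul_add_one_div_two_mul_mem_Ioo {N k : ℕ} (hk : k + 1 < N) :
    π * (k + 1) / (2 * N) ∈ Set.Ioo 0 (π / 2) := by
  have hk' : (k : ℝ) + 1 < N := by exact_mod_cast hk
  have hN : (0 : ℝ) < N := by linarith
  constructor
  · positivity
  · rw [div_lt_div_iff₀ (by positivity) two_pos]
    nlinarith [pi_pos]

theorem Real.cos_pi_mul_add_one_div_two_mul_pos {N k : ℕ} (hk : k + 1 < N) :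
    0 < cos (π * (k + 1) / (2 * N)) :=
  have hα := pi_mul_add_one_div_two_mul_mem_Ioo hk
  cos_pos_of_mem_Ioo ⟨by linarith [hα.1, pi_pos], hα.2⟩

theorem Real.sin_pi_mul_add_one_div_two_mul_pos {N k : ℕ} (hk : k + 1 < N) :
    0 < sin (π * (k + 1) / (2 * N)) :=
  have hα := pi_mul_add_one_div_two_mul_mem_Ioo hk
  sin_pos_of_pos_of_lt_pi hα.1 (by linarith [hα.2, pi_pos])

theorem Real.injective_cos_sq_pi_mul_add_one_div_two_mul (N : ℕ) :
    Function.Injective fun k : Fin (N - 1) => cos (π * (k.val + 1) / (2 * N)) ^ 2 := by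
  intro k l hkl
  have hk := pi_mul_add_one_div_two_mul_mem_Ioo (N := N) (k := k) (by omega)
  have hl := pi_mul_add_one_div_two_mul_mem_Ioo (N := N) (k := l) (by omega)
  replace hkl := (pow_left_inj₀ (cos_pi_mul_add_one_div_two_mul_pos (N := N) (k := k) (by omega)).le
    (cos_pi_mul_add_one_div_two_mul_pos (N := N) (k := l) (by omega)).le two_ne_zero).1 hkl
  have := injOn_cos ⟨hk.1.le, by linarith [hk.2, pi_pos]⟩ ⟨hl.1.le, by linarith [hl.2, pi_pos]⟩ hkl
  have hN : (N : ℝ) ≠ 0 := Nat.cast_ne_zero.2 (by have := k.isLt; omega)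
  field_simp at this
  ext
  exact_mod_cast add_right_cancel this

theorem chebyshev_eigenfunctions_linearly_independent (N : ℕ) (hN : 2 ≤ N) :
    LinearIndependent ℝ (fun j : Fin (N - 1) => fun x : ℝ × ℝ =>
      (Chebyshev.T ℝ (N : ℤ)).eval
          (x.1 * Real.cos (Real.pi * (j.val + 1) / (2 * N))
            + x.2 * Real.sin (Real.pi * (j.val + 1) / (2 * N)))
        - (-1 : ℝ) ^ (j.val + 1) * (Chebyshev.T ℝ (N : ℤ)).eval
          (x.1 * Real.cos (Real.pi * (j.val + 1) / (2 * N))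
            - x.2 * Real.sin (Real.pi * (j.val + 1) / (2 * N)))) := by
  rw [Fintype.linearIndependent_iff]
  intro g hg
  set c : Fin (N - 1) → ℝ := fun k => cos (π * (k.val + 1) / (2 * N))
  set s : Fin (N - 1) → ℝ := fun k => sin (π * (k.val + 1) / (2 * N))
  set ε : Fin (N - 1) → ℝ := fun k => (-1) ^ (k.val + 1)
  have hc₀ (k : Fin (N - 1)) : c k ≠ 0 := (cos_pi_mul_add_one_div_two_mul_pos (by omega)).ne'
  have hs₀ (k : Fin (N - 1)) : s k ≠ 0 := (sin_pi_mul_add_one_div_two_mul_pos (by omega)).ne'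
  have hε (k : Fin (N - 1)) : ε k = if k.val % 2 = 0 then -1 else 1 := by
    split_ifs with hk
    · exact Odd.neg_one_pow (Nat.odd_iff.2 (by omega))
    · exact Even.neg_one_pow (Nat.even_iff.2 (by omega))
  have hrel (x t : ℝ) : ∑ k, g k * ((Chebyshev.T ℝ N).eval (x * c k + t * s k)
      - ε k * (Chebyshev.T ℝ N).eval (x * c k - t * s k)) = 0 := by
    simpa [Finset.sum_apply] using congrFun hg (x, t)
  have hodd : (fun k => g k * (1 - ε k)) = 0 :=
    eq_zero_of_forall_sum_mul_eval_mul_eq_zero_of_mod_two (D := N) (r := 0) (by omega)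
      (fun _ hj => Chebyshev.coeff_T_sub_two_mul_ne_zero hj)
      (injective_cos_sq_pi_mul_add_one_div_two_mul N) hc₀ (fun k hk => by simp [hε, hk])
      (sum_mul_eval_mul_eq_zero_of_forall_sum_eval_add_sub hrel)
  have heven : (fun k => g k * ((1 + ε k) * s k)) = 0 :=
    eq_zero_of_forall_sum_mul_eval_mul_eq_zero_of_mod_two (D := N - 1) (r := 1) (by omega)
      (fun _ _ => Chebyshev.coeff_derivative_T_sub_two_mul_ne_zero (by omega))
      (injective_cos_sq_pi_mul_add_one_div_two_mul N) hc₀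
      (fun k hk => by simp [hε, show k.val % 2 = 0 by omega])
      (sum_mul_eval_derivative_mul_eq_zero_of_forall_sum_eval_add_sub hrel)
  intro k
  rcases Nat.mod_two_eq_zero_or_one k.val with hk | hk
  · simpa [hε, hk] using congrFun hodd k
  · simpa [hε, hk, hs₀ k] using congrFun heven k
end
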